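/- Let L be a finite lattice and L′ an induced sublattice of L. Then R′ = K[L′]/I_{L′} is an algebra retract of R = K[L]/I_L; explicitly, the inclusion K[L′] ⊂ K[L] induces an injective graded K-algebra homomorphism R′ → R, and the graded K-algebra map ε: R → R′ induced by sending x_a ↦ 0 for a ∈ L∖L′ and x_a ↦ x_a for a ∈ L′ is a surjection whose restriction to R′ is the identity. -/
import Mathlib


open MvPolynomial

/-- The join-meet ideal `I_L` of a finite lattice `L`, generated by
`x_a x_b − x_{a∧b} x_{a∨b}` for incomparable `a, b ∈ L`. -/
noncomputable def joinMeetIdeal (K : Type*) [Field K] (L : Type*) [Lattice L] :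
    Ideal (MvPolynomial L K) :=
  Ideal.span {f | ∃ a b : L, ¬ a ≤ b ∧ ¬ b ≤ a ∧ f = X a * X b - X (a ⊓ b) * X (a ⊔ b)}

/-- The join-meet ideal of a sublattice `L' ⊆ L`, an ideal of `K[x_a : a ∈ L']`. -/
noncomputable def joinMeetIdealSub (K : Type*) [Field K] (L : Type*) [Lattice L] (L' : Set L) [DecidablePred (· ∈ L')]
    (hmeet : ∀ a b : L, a ∈ L' → b ∈ L' → a ⊓ b ∈ L')
    (hjoin : ∀ a b : L, a ∈ L' → b ∈ L' → a ⊔ b ∈ L') :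
    Ideal (MvPolynomial L' K) :=
  Ideal.span {f | ∃ a b : L', ¬ (a : L) ≤ b ∧ ¬ (b : L) ≤ a ∧
    f = X a * X b -
      X (⟨(a : L) ⊓ b, hmeet a b a.2 b.2⟩ : L') * X (⟨(a : L) ⊔ b, hjoin a b a.2 b.2⟩ : L')}


/-- If `L'` is an induced sublattice of a finite lattice `L`, then `R' = K[L']/I_{L'}` is an
algebra retract of `R = K[L]/I_L`: the inclusion of polynomial rings induces an injective
`K`-algebra map `ι : R' → R`, the map sending `x_a ↦ 0` for `a ∉ L'` and `x_a ↦ x_a` for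
`a ∈ L'` induces a surjective `K`-algebra map `ε : R → R'`, and `ε ∘ ι = id`. -/
theorem joinMeet_algebra_retract_of_induced_sublattice (K : Type*) [Field K]
    (L : Type*) [Lattice L] [Fintype L] (L' : Set L) [DecidablePred (· ∈ L')]
    (hmeet : ∀ a b : L, a ∈ L' → b ∈ L' → a ⊓ b ∈ L')
    (hjoin : ∀ a b : L, a ∈ L' → b ∈ L' → a ⊔ b ∈ L')
    (hinduced : ∀ a b : L, a ⊔ b ∈ L' → a ⊓ b ∈ L' → a ∈ L' ∧ b ∈ L') :
    ∃ (ι : (MvPolynomial L' K ⧸ joinMeetIdealSub K L L' hmeet hjoin) →ₐ[K]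
        (MvPolynomial L K ⧸ joinMeetIdeal K L))
      (ε : (MvPolynomial L K ⧸ joinMeetIdeal K L) →ₐ[K]
        (MvPolynomial L' K ⧸ joinMeetIdealSub K L L' hmeet hjoin)),
      Function.Injective ι ∧ Function.Surjective ε ∧ (∀ r, ε (ι r) = r) ∧
      (∀ p : MvPolynomial L' K,
        ι (Ideal.Quotient.mk _ p) = Ideal.Quotient.mk _ (rename (Subtype.val : L' → L) p)) ∧
      (∀ q : MvPolynomial L K,
        ε (Ideal.Quotient.mk _ q) = Ideal.Quotient.mk _
          (aeval (fun a : L => if h : a ∈ L' then (X (⟨a, h⟩ : L') : MvPolynomial L' K)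
            else 0) q)) := by
  classical
  set I : Ideal (MvPolynomial L K) := joinMeetIdeal K L with hI
  set I' : Ideal (MvPolynomial (↥L') K) := joinMeetIdealSub K L L' hmeet hjoin with hI'
  set e : L → MvPolynomial L' K :=
    fun a => if h : a ∈ L' then (X (⟨a, h⟩ : L') : MvPolynomial L' K) else 0 with he
  set φ : MvPolynomial (↥L') K →ₐ[K] MvPolynomial L K := rename (Subtype.val : L' → L) with hφ
  set ψ : MvPolynomial L K →ₐ[K] MvPolynomial (↥L') K := aeval e with hψ
  have hφI : ∀ p ∈ I', ((Ideal.Quotient.mkₐ K I).comp φ) p = 0 := by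
    intro p hp
    have hsub : I' ≤ I.comap (φ : MvPolynomial (↥L') K →+* MvPolynomial L K) := by
      rw [hI', joinMeetIdealSub, Ideal.span_le]
      rintro f ⟨a, b, hab, hba, rfl⟩
      refine Ideal.mem_comap.mpr ?_
      show φ (X a * X b -
        X (⟨(a : L) ⊓ b, hmeet a b a.2 b.2⟩ : L') * X (⟨(a : L) ⊔ b, hjoin a b a.2 b.2⟩ : L')) ∈ I
      refine Ideal.subset_span ⟨(a : L), (b : L), hab, hba, ?_⟩
      simp [hφ, map_sub, map_mul, rename_X]
    show Ideal.Quotient.mk I (φ p) = 0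
    rw [Ideal.Quotient.eq_zero_iff_mem]
    exact hsub hp
  have hψI : ∀ p ∈ I, ((Ideal.Quotient.mkₐ K I').comp ψ) p = 0 := by
    intro p hp
    have hsub : I ≤ I'.comap (ψ : MvPolynomial L K →+* MvPolynomial (↥L') K) := by
      rw [hI, joinMeetIdeal, Ideal.span_le]
      rintro f ⟨a, b, hab, hba, rfl⟩
      refine Ideal.mem_comap.mpr ?_
      show ψ (X a * X b - X (a ⊓ b) * X (a ⊔ b)) ∈ I'
      rw [hψ]
      simp only [map_sub, map_mul, aeval_X]
      by_cases ha : a ∈ L'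
      · by_cases hb : b ∈ L'
        · refine Ideal.subset_span ⟨⟨a, ha⟩, ⟨b, hb⟩, hab, hba, ?_⟩
          simp [he, dif_pos ha, dif_pos hb, dif_pos (hmeet a b ha hb),
            dif_pos (hjoin a b ha hb)]
        · have hnot : a ⊓ b ∉ L' ∨ a ⊔ b ∉ L' := by
            by_contra h
            push_neg at h
            exact hb ((hinduced a b h.2 h.1).2)
          have hzero : e a * e b - e (a ⊓ b) * e (a ⊔ b) = 0 := by
            rcases hnot with h | h
            · simp [he, dif_neg hb, dif_neg h]
            · simp [he, dif_neg hb, dif_neg h]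
          rw [hzero]
          exact zero_mem _
      · have hnot : a ⊓ b ∉ L' ∨ a ⊔ b ∉ L' := by
          by_contra h
          push_neg at h
          exact ha ((hinduced a b h.2 h.1).1)
        have hzero : e a * e b - e (a ⊓ b) * e (a ⊔ b) = 0 := by
          rcases hnot with h | h
          · simp [he, dif_neg ha, dif_neg h]
          · simp [he, dif_neg ha, dif_neg h]
        rw [hzero]
        exact zero_mem _
    show Ideal.Quotient.mk I' (ψ p) = 0
    rw [Ideal.Quotient.eq_zero_iff_mem]
    exact hsub hp
  have hretr : ∀ p : MvPolynomial (↥L') K, ψ (φ p) = p := by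
    intro p
    rw [hφ, hψ, aeval_rename]
    have hcomp : (e ∘ (Subtype.val : L' → L)) = X := by
      funext s
      simp [he, dif_pos s.2, Subtype.coe_eta]
    rw [hcomp]
    simp [aeval_X_left]
  refine ⟨Ideal.Quotient.liftₐ I' ((Ideal.Quotient.mkₐ K I).comp φ) hφI,
    Ideal.Quotient.liftₐ I ((Ideal.Quotient.mkₐ K I').comp ψ) hψI, ?_, ?_, ?_, ?_, ?_⟩
  case refine_3 =>
    intro r
    obtain ⟨p, rfl⟩ := Ideal.Quotient.mk_surjective r
    show Ideal.Quotient.mk I' (ψ (φ p)) = Ideal.Quotient.mk I' p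
    rw [hretr p]
  case refine_1 =>
    intro x y hxy
    have := congrArg (Ideal.Quotient.liftₐ I ((Ideal.Quotient.mkₐ K I').comp ψ) hψI) hxy
    obtain ⟨p, rfl⟩ := Ideal.Quotient.mk_surjective x
    obtain ⟨q, rfl⟩ := Ideal.Quotient.mk_surjective y
    have h1 : Ideal.Quotient.mk I' (ψ (φ p)) = Ideal.Quotient.mk I' (ψ (φ q)) := this
    rwa [hretr p, hretr q] at h1
  case refine_2 =>
    intro y
    obtain ⟨p, rfl⟩ := Ideal.Quotient.mk_surjective y
    refine ⟨Ideal.Quotient.mk I (φ p), ?_⟩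
    show Ideal.Quotient.mk I' (ψ (φ p)) = Ideal.Quotient.mk I' p
    rw [hretr p]
  case refine_4 =>
    intro p
    rfl
  case refine_5 =>
    intro q
    rfl
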